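/- Let C be a closed, evaluable, self-describing circuit on an alphabet Σ with dependency graph D. Let C' be the circuit on the alphabet Σ × Wirings obtained from C by replacing each gate g by the gate with the same wiring whose function outputs, on each output, the pair (the corresponding output of g's function, the wiring of g). Then the unique conforming arc valuation eval_{C'} is a locally deterministic coloring of the arcs of D. -/

import Mathlib

attribute [local instance] Classical.propDecidable

namespace SelfAssembly

/-! ### Positions and directions -/

/-- Positions of the discrete plane. -/
abbrev Pos : Type := ℤ × ℤ

/-- The four cardinal directions. -/
inductive Dir : Type
  | N | E | S | W
deriving DecidableEq

/-- The unit vector associated with a direction. -/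
def Dir.vec : Dir → Pos
  | .N => (0, 1)
  | .E => (1, 0)
  | .S => (0, -1)
  | .W => (-1, 0)

/-- The opposite direction. -/
def Dir.opp : Dir → Dir
  | .N => .S
  | .E => .W
  | .S => .N
  | .W => .E

/-- The list of all directions (canonical order). -/
def Dir.all : List Dir := [.N, .E, .S, .W]

/-- Two positions adjacent in the grid graph of ℤ². -/
def gridAdj (z z' : Pos) : Prop := ∃ d : Dir, z' = z + d.vec

lemma gridAdj_symm {z z' : Pos} (h : gridAdj z z') : gridAdj z' z := by
  obtain ⟨d, rfl⟩ := h
  refine ⟨d.opp, ?_⟩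
  cases d <;>
    simp [Dir.vec, Dir.opp, Prod.ext_iff, Prod.fst_add, Prod.snd_add]

lemma gridAdj_irrefl (z : Pos) : ¬ gridAdj z z := by
  rintro ⟨d, h⟩
  cases d <;>
    simp [Dir.vec, Prod.ext_iff, Prod.fst_add, Prod.snd_add] at h

noncomputable section

/-! ### Shapes and substitutions on ℕ² -/

/-- Positions with natural coordinates. -/
abbrev NPos : Type := ℕ × ℕ

/-- The embedding of ℕ² into ℤ². -/
def embedN (p : NPos) : Pos := ((p.1 : ℤ), (p.2 : ℤ))

/-- The bounding-box width of a shape: `1 +` the maximal x-coordinate. -/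
def wdt (G : Set NPos) : ℕ := sSup (Prod.fst '' G) + 1

/-- The bounding-box height of a shape: `1 +` the maximal y-coordinate. -/
def hgt (G : Set NPos) : ℕ := sSup (Prod.snd '' G) + 1

/-- The substitution associated with a generator `G`:
`σ_G(X) = { p | ⌊p / G⌋ ∈ X ∧ p mod G ∈ G }`. -/
def subst (G : Set NPos) (X : Set NPos) : Set NPos :=
  {p | (p.1 / wdt G, p.2 / hgt G) ∈ X ∧ (p.1 % wdt G, p.2 % hgt G) ∈ G}

/-- The `k`-th iterate `G^k = σ_G^k({(0,0)})`. -/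
def iterG (G : Set NPos) (k : ℕ) : Set NPos := (subst G)^[k] {(0, 0)}

/-- The discrete self-similar fractal shape `G^∞ = ⋃ₖ G^k`. -/
def limitG (G : Set NPos) : Set NPos := ⋃ k, iterG G k

/-- A shape is connected if any two of its cells are linked by a path of
grid-adjacent cells of the shape. -/
def ShapeConnected (G : Set NPos) : Prop :=
  ∀ p ∈ G, ∀ q ∈ G,
    Relation.ReflTransGen (fun a b => a ∈ G ∧ b ∈ G ∧ gridAdj (embedN a) (embedN b)) p q

/-- The generator `K = {0,…,5}² \ {2,3}²` of the Sierpinski Cacarpet. -/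
def Kgen : Set NPos :=
  {p | p.1 < 6 ∧ p.2 < 6 ∧ ¬((p.1 = 2 ∨ p.1 = 3) ∧ (p.2 = 2 ∨ p.2 = 3))}

/-- The 2×2 square `H = {0,1}²`. -/
def Hsq : Set NPos := {p | p.1 < 2 ∧ p.2 < 2}

/-! ### Grids, grid neighborhood graphs, ports, bandwidth -/

/-- The grid `G^#`: all positions of ℤ² which are congruent, modulo the
bounding box of `G`, to a cell of `G`. -/
def gridOf (G : Set NPos) : Set Pos :=
  {z | ((z.1 % (wdt G : ℤ)).toNat, (z.2 % (hgt G : ℤ)).toNat) ∈ G}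

/-- The vertex set of the grid neighborhood graph `G⁺`:
`G` together with the grid cells at distance 1 of `G`. -/
def gplusV (G : Set NPos) : Set Pos :=
  embedN '' G ∪ {z | z ∈ gridOf G ∧ ∃ d : Dir, z + d.vec ∈ embedN '' G}

/-- The grid neighborhood graph `G⁺`: the subgraph of the grid graph of ℤ²
induced by `gplusV G`. -/
def gplus (G : Set NPos) : SimpleGraph Pos where
  Adj z z' := z ∈ gplusV G ∧ z' ∈ gplusV G ∧ gridAdj z z'
  symm := ⟨fun _ _ h => ⟨h.2.1, h.1, gridAdj_symm h.2.2⟩⟩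
  loopless := ⟨fun z h => gridAdj_irrefl z h.2.2⟩

/-- The `d`-port of `G`: `G^{+d} = {p ∈ G^# : p − d ∈ G}`. -/
def port (G : Set NPos) (d : Dir) : Set Pos :=
  {z | z ∈ gridOf G ∧ z - d.vec ∈ embedN '' G}

/-- There exist `n` pairwise vertex-disjoint paths in `Gr` from `Src` to `Tgt`. -/
def DisjointConnections (Gr : SimpleGraph Pos) (Src Tgt : Set Pos) (n : ℕ) : Prop :=
  ∃ (u v : Fin n → Pos) (w : ∀ i, Gr.Walk (u i) (v i)),
    (∀ i, u i ∈ Src) ∧ (∀ i, v i ∈ Tgt) ∧ (∀ i, (w i).IsPath) ∧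
    ∀ i j, i ≠ j → ∀ z, z ∈ (w i).support → z ∉ (w j).support

/-- The `(d,d')`-bandwidth of `G`: the maximal number of pairwise
vertex-disjoint paths from the `d`-port to the `d'`-port in `G⁺`. -/
def bandwidth (G : Set NPos) (d d' : Dir) : ℕ :=
  sSup {n | DisjointConnections (gplus G) (port G d) (port G d') n}

/-! ### Subconnectors -/

/-- A witness that `G⁺` (with its ports marked) contains a pointed subgraph
which is a pointed subdivision of `H⁺` (with its ports marked): an injective
map `φ` of the vertices of `H⁺` sending `d`-ports to `d`-ports, together with,
for each edge of `H⁺`, a path of `G⁺` between the images of its endpoints,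
these paths being internally disjoint from each other and from the images of
the vertices of `H⁺`. -/
structure SubdivEmbed (H G : Set NPos) where
  φ : Pos → Pos
  inj : Set.InjOn φ (gplusV H)
  marks : ∀ d : Dir, ∀ v ∈ port H d, φ v ∈ port G d
  walk : ∀ u v : Pos, (gplus H).Adj u v → (gplus G).Walk (φ u) (φ v)
  walk_path : ∀ u v h, (walk u v h).IsPath
  walk_avoid : ∀ u v h, ∀ z ∈ (walk u v h).support,
      ∀ w ∈ gplusV H, z = φ w → (w = u ∨ w = v)
  walk_disj : ∀ u v h u' v' h', ¬((u = u' ∧ v = v') ∨ (u = v' ∧ v = u')) →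
      ∀ z, z ∈ (walk u v h).support → z ∈ (walk u' v' h').support →
        ((z = φ u ∨ z = φ v) ∧ (z = φ u' ∨ z = φ v'))

/-- `H` is a subconnector of `G`, written `H ⪯ G`. -/
def Subconnector (H G : Set NPos) : Prop := Nonempty (SubdivEmbed H G)

/-- Integer division of a position by the bounding box of a shape. -/
def quotP (P : Set NPos) (z : Pos) : Pos := (z.1.fdiv (wdt P), z.2.fdiv (hgt P))

/-- Remainder of a position modulo the bounding box of a shape. -/
def modP (P : Set NPos) (z : Pos) : Pos := (z.1.fmod (wdt P), z.2.fmod (hgt P))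

/-- `v` is a `D`-disconnector of `P⁺`: for every pair `(d,d') ∈ D`, removing
`v` from `P⁺` disconnects the `d`-port from the `d'`-port. -/
def Disconnector (P : Set NPos) (D : Set (Dir × Dir)) (v : Pos) : Prop :=
  ∀ dd ∈ D, ¬ ∃ (a b : Pos) (w : (gplus P).Walk a b),
      a ∈ port P dd.1 ∧ b ∈ port P dd.2 ∧ v ∉ w.support

/-- `Cause(v, D)`: the pairs of directions `(δ, δ')` such that some path of
`P⁺` from a `d`-port to a `d'`-port with `(d,d') ∈ D` enters `v` from
direction `δ` and leaves it through direction `δ'`. -/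
def Cause (P : Set NPos) (D : Set (Dir × Dir)) (v : Pos) : Set (Dir × Dir) :=
  {p | ∃ dd ∈ D, ∃ (a b : Pos) (w : (gplus P).Walk a b),
      a ∈ port P dd.1 ∧ b ∈ port P dd.2 ∧ w.IsPath ∧
      ∃ i : ℕ, w.support[i]? = some (v - p.1.vec) ∧
        w.support[i + 1]? = some v ∧
        w.support[i + 2]? = some (v + p.2.vec)}

/-! ### The abstract Tile Assembly Model -/

/-- A Wang tile: a glue on each side. -/
abbrev Tile (Glue : Type) := Dir → Glue

/-- An assembly: a partial function from positions to tiles. -/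
abbrev Assembly (Glue : Type) := Pos → Option (Tile Glue)

/-- The domain of an assembly. -/
def adom {Glue : Type} (A : Assembly Glue) : Set Pos := {z | A z ≠ none}

/-- A seeded tile assembly system. -/
structure TAS (Glue : Type) where
  tileset : Finset (Tile Glue)
  strength : Glue → ℤ
  temp : ℕ
  seed : Assembly Glue
  seed_tiles : ∀ z t, seed z = some t → t ∈ tileset

/-- The binding of the edge out of `z` in direction `d` in the assembly `A`:
the strength of the common glue if the two facing glues match, `0` otherwise. -/
def binding {Glue : Type} (S : TAS Glue) (A : Assembly Glue) (z : Pos) (d : Dir) : ℤ :=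
  match A z, A (z + d.vec) with
  | some t, some t' => if t d = t' d.opp then S.strength (t d) else 0
  | _, _ => 0

/-- An assembly is stable if every cut of its domain is crossed by edges of
total binding at least the temperature. -/
def Stable {Glue : Type} (S : TAS Glue) (A : Assembly Glue) : Prop :=
  ∀ P : Set Pos, P ⊆ adom A → P.Nonempty → (adom A \ P).Nonempty →
    ∃ F : Finset (Pos × Dir),
      (∀ e ∈ F, e.1 ∈ P ∧ e.1 + e.2.vec ∈ adom A \ P) ∧
      (S.temp : ℤ) ≤ ∑ e ∈ F, binding S A e.1 e.2

/-- `Attach S A B`: `B` is obtained from `A` by attaching one tile of the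
tileset at an empty position, the result being stable. -/
def Attach {Glue : Type} (S : TAS Glue) (A B : Assembly Glue) : Prop :=
  ∃ t ∈ S.tileset, ∃ z : Pos, A z = none ∧ B = Function.update A z (some t) ∧ Stable S B

/-- A production of `S`: an assembly which is the limit of a (finite or
infinite) sequence of attachments starting from the seed. -/
def IsProduction {Glue : Type} (S : TAS Glue) (A : Assembly Glue) : Prop :=
  ∃ α : ℕ → Assembly Glue, α 0 = S.seed ∧
    (∀ n, α (n + 1) = α n ∨ Attach S (α n) (α (n + 1))) ∧
    ∀ z t, A z = some t ↔ ∃ n, (α n) z = some t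

/-- A terminal production: a production to which no tile can be attached. -/
def Terminal {Glue : Type} (S : TAS Glue) (A : Assembly Glue) : Prop :=
  IsProduction S A ∧ ∀ B, ¬ Attach S A B

/-- `S` strictly self-assembles `X`: every terminal production has domain
exactly `X`. -/
def StrictlyAssembles {Glue : Type} (S : TAS Glue) (X : Set Pos) : Prop :=
  ∀ A, Terminal S A → adom A = X

/-- `S` weakly self-assembles `X`: there is a subset `Y` of the tileset such
that in every terminal production, the positions carrying a tile of `Y` are
exactly those of `X`. -/
def WeaklyAssembles {Glue : Type} (S : TAS Glue) (X : Set Pos) : Prop :=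
  ∃ Y : Finset (Tile Glue), Y ⊆ S.tileset ∧
    ∀ A, Terminal S A → ∀ z : Pos, (∃ t ∈ Y, A z = some t) ↔ z ∈ X

/-! ### Sets of assemblies for the Tree Pump Lemma -/

/-- The fill-in of `D`: `D` together with the positions from which every
(self-avoiding) path avoiding `D` is finite. -/
def fillIn (D : Set Pos) : Set Pos :=
  D ∪ {p | ¬ ∃ f : ℕ → Pos, f 0 = p ∧ Function.Injective f ∧
        ∀ n, f n ∉ D ∧ gridAdj (f n) (f (n + 1))}

/-- The assembly `A` encircles an `m × m` square: the fill-in of its domain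
contains a full `m × m` square of positions. -/
def Encircles {Glue : Type} (A : Assembly Glue) (m : ℕ) : Prop :=
  ∃ z : Pos, ∀ i j : ℕ, i < m → j < m → z + ((i : ℤ), (j : ℤ)) ∈ fillIn (adom A)

/-- Inner product of a position with a real vector. -/
def dot (p : Pos) (dv : ℝ × ℝ) : ℝ := (p.1 : ℝ) * dv.1 + (p.2 : ℝ) * dv.2

/-- The assembly covers no position `p` with `p·d > k + |seed|`. -/
def BBounded {Glue : Type} (S : TAS Glue) (k : ℝ) (dv : ℝ × ℝ) (A : Assembly Glue) : Prop :=
  ∀ p ∈ adom A, dot p dv ≤ k + (adom S.seed).ncard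

/-- The assembly contains a nonempty subassembly periodic with a period `p`
with `|p·d| > 0`. -/
def PPeriodic {Glue : Type} (dv : ℝ × ℝ) (A : Assembly Glue) : Prop :=
  ∃ pv : Pos, dot pv dv ≠ 0 ∧
    ∃ E : Set Pos, E.Nonempty ∧ E ⊆ adom A ∧ ∀ z ∈ E, z + pv ∈ E ∧ A (z + pv) = A z

/-! ### Embedded circuits -/

/-- A wiring on a unit cell: an ordered list of input sides, a set of output
sides (the remaining sides being inert), and for each output side its
output-wire datum (the ordered input sides of the next cell, with the
distinguished opposite direction) and the index of the corresponding output of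
the gate. -/
structure Wiring where
  inputs : List Dir
  inputs_nodup : inputs.Nodup
  outputs : Finset Dir
  disjoint : ∀ d ∈ inputs, d ∉ outputs
  outWire : Dir → List Dir × Dir
  outWire_distinguished : ∀ d ∈ outputs,
    (outWire d).2 = d.opp ∧ d.opp ∈ (outWire d).1 ∧ (outWire d).1.Nodup
  outIdx : Dir → ℕ
  outIdx_lt : ∀ d ∈ outputs, outIdx d < outputs.card
  outIdx_inj : ∀ d ∈ outputs, ∀ d' ∈ outputs, outIdx d = outIdx d' → d = d'

/-- A gate: a wiring together with a function (a function `Σ^i → Σ^o`,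
represented as a function on lists; see the field `fn_arity` of `Circuit`). -/
structure Gate (A : Type) where
  wiring : Wiring
  fn : List A → List A

/-- A circuit on the alphabet `A`: gates placed on the vertex set `dom` of an
oriented subgraph of ℤ² with arc set `arcs`, with input and output buses of
boundary arcs, such that wirings of neighbouring gates match. -/
structure Circuit (A : Type) where
  dom : Set Pos
  arcs : Set (Pos × Dir)
  inputBus : Set (Pos × Dir)
  outputBus : Set (Pos × Dir)
  gate : Pos → Gate A
  arcs_src : ∀ a ∈ arcs, a.1 ∈ dom
  arcs_tgt : ∀ a ∈ arcs, a.1 + a.2.vec ∈ dom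
  arcs_once : ∀ a ∈ arcs, (a.1 + a.2.vec, a.2.opp) ∉ arcs
  inputBus_mem : ∀ a ∈ inputBus, a.1 ∉ dom ∧ a.1 + a.2.vec ∈ dom
  outputBus_mem : ∀ a ∈ outputBus, a.1 ∈ dom ∧ a.1 + a.2.vec ∉ dom
  arc_wiring : ∀ a ∈ arcs,
      a.2 ∈ (gate a.1).wiring.outputs ∧
      a.2.opp ∈ (gate (a.1 + a.2.vec)).wiring.inputs ∧
      (gate a.1).wiring.outWire a.2 = ((gate (a.1 + a.2.vec)).wiring.inputs, a.2.opp)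
  nonarc_inert : ∀ z ∈ dom, ∀ d : Dir, z + d.vec ∈ dom →
      (z, d) ∉ arcs → (z + d.vec, d.opp) ∉ arcs →
      d ∉ (gate z).wiring.inputs ∧ d ∉ (gate z).wiring.outputs
  boundary : ∀ z ∈ dom, ∀ d : Dir, z + d.vec ∉ dom →
      ((d ∉ (gate z).wiring.inputs ∧ d ∉ (gate z).wiring.outputs ∧
          (z, d) ∉ outputBus ∧ (z + d.vec, d.opp) ∉ inputBus) ∨
       (d ∈ (gate z).wiring.outputs ∧ (z, d) ∈ outputBus) ∨
       (d ∈ (gate z).wiring.inputs ∧ (z + d.vec, d.opp) ∈ inputBus))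
  fn_arity : ∀ z ∈ dom, ∀ xs : List A, xs.length = (gate z).wiring.inputs.length →
      ((gate z).fn xs).length = (gate z).wiring.outputs.card

/-- The list of values carried by the incoming arcs of the cell `z`, in the
order of the input sides of its gate. -/
def inputVals {A : Type} (C : Circuit A) (v : Pos × Dir → A) (z : Pos) : List A :=
  (C.gate z).wiring.inputs.map fun e => v (z + e.vec, e.opp)

/-- An arc valuation conforms to the circuit `C` if, at each gate, the values
on the output arcs are the components of the gate's function applied to the
values on its input arcs. -/
def Conforms {A : Type} (C : Circuit A) (v : Pos × Dir → A) : Prop :=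
  ∀ z ∈ C.dom, ∀ d ∈ (C.gate z).wiring.outputs,
    ((C.gate z).fn (inputVals C v z))[(C.gate z).wiring.outIdx d]? = some (v (z, d))

/-- A circuit is closed when its input bus is empty. -/
def Circuit.Closed {A : Type} (C : Circuit A) : Prop := C.inputBus = ∅

/-- Well-foundedness of the dependency graph: no directed cycle and no
infinite backwards path. -/
def Circuit.WellFoundedDep {A : Type} (C : Circuit A) : Prop :=
  WellFounded fun b a : Pos => ∃ d : Dir, (b, d) ∈ C.arcs ∧ b + d.vec = a

/-- An evaluable circuit: well-founded and finitely rooted. -/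
def Circuit.Evaluable {A : Type} (C : Circuit A) : Prop :=
  C.WellFoundedDep ∧ C.inputBus.Finite ∧
    {z | z ∈ C.dom ∧ (C.gate z).wiring.inputs = []}.Finite

/-- A circuit is self-describing if some decoding function recovers the gate
at each position from the list of pairs (value, direction) of its incoming
arcs in the conforming valuation. -/
def Circuit.SelfDescribing {A : Type} (C : Circuit A) : Prop :=
  ∃ dec : List (A × Dir) → Gate A,
    ∀ v : Pos × Dir → A, Conforms C v → ∀ z ∈ C.dom,
      dec ((C.gate z).wiring.inputs.map fun e => (v (z + e.vec, e.opp), e.opp)) = C.gate z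

/-! ### Oriented graphs on ℤ² and locally deterministic arc colorings -/

/-- An oriented subgraph of ℤ², with arcs between adjacent cells and at most
one arc per edge. An arc is a pair `(z, d)`: the arc out of `z` in
direction `d`. -/
structure ArcGraph where
  verts : Set Pos
  arcs : Set (Pos × Dir)
  arcs_src : ∀ a ∈ arcs, a.1 ∈ verts
  arcs_tgt : ∀ a ∈ arcs, a.1 + a.2.vec ∈ verts
  arcs_once : ∀ a ∈ arcs, (a.1 + a.2.vec, a.2.opp) ∉ arcs

/-- The directions of the incoming arcs of `v` (canonical order). -/
def inDirsOf (Ar : Set (Pos × Dir)) (v : Pos) : List Dir :=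
  Dir.all.filter fun e => (v - e.vec, e) ∈ Ar

/-- The input vector of a vertex: the list of pairs (direction, color) of its
incoming arcs. -/
def inputVectorOf {C : Type} (Ar : Set (Pos × Dir)) (P : Pos × Dir → C) (v : Pos) :
    List (Dir × C) :=
  (inDirsOf Ar v).map fun e => (e, P (v - e.vec, e))

/-- A coloring `P` of the arcs `Ar` is locally deterministic if there are two
prediction functions `πin`, `πsym` such that for every arc `e : a → b` in
direction `d`, `P e = πsym (input vector of a, d)` and `πin (d, P e)` is the
set of directions of the incoming arcs of `b`. -/
def LocallyDeterministic {C : Type} (Ar : Set (Pos × Dir)) (P : Pos × Dir → C) : Prop :=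
  ∃ (πin : Dir × C → Set Dir) (πsym : List (Dir × C) × Dir → C),
    ∀ a ∈ Ar,
      P a = πsym (inputVectorOf Ar P a.1, a.2) ∧
      πin (a.2, P a) = {e : Dir | (a.1 + a.2.vec - e.vec, e) ∈ Ar}

/-- The vertex type of `v`: the partial function assigning to each direction
`d` in which `v` has an arc the pair (direction of that arc, its color). -/
def vertexType {C : Type} (Ar : Set (Pos × Dir)) (P : Pos × Dir → C) (v : Pos) :
    Dir → Option (Dir × C) := fun d =>
  if (v, d) ∈ Ar then some (d, P (v, d))
  else if (v + d.vec, d.opp) ∈ Ar then some (d.opp, P (v + d.vec, d.opp))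
  else none

/-- The atlas of a coloring: the set of vertex types of its vertices. -/
def atlas {C : Type} (Gr : ArcGraph) (P : Pos × Dir → C) : Set (Dir → Option (Dir × C)) :=
  (vertexType Gr.arcs P) '' Gr.verts

/-- Well-foundedness (acyclicity + no infinite backwards path) of an oriented
graph on ℤ². -/
def ArcGraph.WellFoundedArcs (Gr : ArcGraph) : Prop :=
  WellFounded fun b a : Pos => ∃ d : Dir, (b, d) ∈ Gr.arcs ∧ b + d.vec = a

/-- The vertices of in-degree 0 of an oriented graph on ℤ². -/
def ArcGraph.roots (Gr : ArcGraph) : Set Pos :=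
  {v | v ∈ Gr.verts ∧ ∀ e : Dir, (v - e.vec, e) ∉ Gr.arcs}

end

/-! Each lifted gate stamps its own wiring on its outgoing arcs. In a closed circuit the
incoming arcs of a cell are exactly its input sides, so the wiring carried by any incoming arc
of `z` gives, through its output-wire datum, the ordered input sides of `z`. Together with the
values on those arcs, this is what the decoder of the self-describing circuit needs to recover
the gate at `z`, hence the colours of its outgoing arcs. Likewise the wiring carried by an arc
lists the input sides of its target. So colours factor through input vectors, incoming
directions factor through colours, and the prediction functions are extensions along these
factorisations. -/

lemma Dir.opp_opp (d : Dir) : d.opp.opp = d := by cases d <;> rfl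

lemma Dir.vec_opp (d : Dir) : d.opp.vec = -d.vec := by
  cases d <;> simp [Dir.vec, Dir.opp]

lemma sub_opp_vec (z : Pos) (e : Dir) : z - e.opp.vec = z + e.vec := by
  rw [Dir.vec_opp, sub_neg_eq_add]

lemma mem_inDirsOf {Ar : Set (Pos × Dir)} {v : Pos} {δ : Dir} :
    δ ∈ inDirsOf Ar v ↔ (v - δ.vec, δ) ∈ Ar := by
  simp only [inDirsOf, List.mem_filter, decide_eq_true_eq, and_iff_right_iff_imp]
  intro _
  cases δ <;> simp [Dir.all]

section ArcColoring

variable {C : Type} {Ar : Set (Pos × Dir)} {P : Pos × Dir → C}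

lemma inDirsOf_eq_of_inputVectorOf_eq {z z' : Pos}
    (h : inputVectorOf Ar P z = inputVectorOf Ar P z') : inDirsOf Ar z = inDirsOf Ar z' := by
  simpa [inputVectorOf, Function.comp_def] using congrArg (List.map Prod.fst) h

lemma apply_eq_of_inputVectorOf_eq {z z' : Pos} {δ : Dir}
    (h : inputVectorOf Ar P z = inputVectorOf Ar P z') (hδ : (z - δ.vec, δ) ∈ Ar) :
    P (z - δ.vec, δ) = P (z' - δ.vec, δ) := by
  have hmem : (δ, P (z - δ.vec, δ)) ∈ inputVectorOf Ar P z' :=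
    h ▸ List.mem_map_of_mem (mem_inDirsOf.mpr hδ)
  obtain ⟨e, -, he⟩ := List.mem_map.mp hmem
  obtain ⟨rfl, hP⟩ := Prod.mk.inj he
  exact hP.symm

lemma locallyDeterministic_of_factorsThrough
    (hsym : Function.FactorsThrough (fun a : Ar => P a)
      (fun a : Ar => (inputVectorOf Ar P a.1.1, a.1.2)))
    (hin : Function.FactorsThrough (fun a : Ar => {e : Dir | (a.1.1 + a.1.2.vec - e.vec, e) ∈ Ar})
      (fun a : Ar => (a.1.2, P a))) :
    LocallyDeterministic Ar P :=
  ⟨Function.extend _ _ fun _ => ∅, Function.extend _ _ fun _ => P ((0, 0), .N),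
    fun a ha => ⟨(hsym.extend_apply _ ⟨a, ha⟩).symm, hin.extend_apply _ ⟨a, ha⟩⟩⟩

end ArcColoring

section Circuit

variable {A B : Type} {C : Circuit A}

lemma Circuit.Closed.sub_mem_arcs_iff (hclosed : C.Closed) {z : Pos} (hz : z ∈ C.dom)
    (δ : Dir) : (z - δ.vec, δ) ∈ C.arcs ↔ δ.opp ∈ (C.gate z).wiring.inputs := by
  have hvec : z + δ.opp.vec = z - δ.vec := by rw [Dir.vec_opp, ← sub_eq_add_neg]
  refine ⟨fun h => by simpa using (C.arc_wiring _ h).2.1, fun h => ?_⟩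
  have hout : δ.opp ∉ (C.gate z).wiring.outputs := (C.gate z).wiring.disjoint δ.opp h
  by_cases hdom : z + δ.opp.vec ∈ C.dom
  · by_contra harc
    have hnot_out : (z, δ.opp) ∉ C.arcs := fun h' => hout (C.arc_wiring _ h').1
    have hnot_in : (z + δ.opp.vec, δ.opp.opp) ∉ C.arcs := by rwa [Dir.opp_opp, hvec]
    exact (C.nonarc_inert z hz δ.opp hdom hnot_out hnot_in).1 h
  · rcases C.boundary z hz δ.opp hdom with h' | h' | h'
    · exact absurd h h'.1
    · exact absurd h'.1 hout
    · exact (Set.eq_empty_iff_forall_notMem.mp hclosed _ h'.2).elim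

lemma Circuit.Closed.apply_add_eq_of_inputVectorOf_eq (hclosed : C.Closed) {P : Pos × Dir → B}
    {z z' : Pos} (hz : z ∈ C.dom) (h : inputVectorOf C.arcs P z = inputVectorOf C.arcs P z')
    {e : Dir} (he : e ∈ (C.gate z).wiring.inputs) :
    P (z + e.vec, e.opp) = P (z' + e.vec, e.opp) := by
  have harc : (z - e.opp.vec, e.opp) ∈ C.arcs :=
    (hclosed.sub_mem_arcs_iff hz e.opp).mpr (by rwa [Dir.opp_opp])
  simpa only [sub_opp_vec] using apply_eq_of_inputVectorOf_eq h harc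

lemma Circuit.inputs_eq_outWire {v' : Pos × Dir → B × Wiring}
    (hw : ∀ a ∈ C.arcs, (v' a).2 = (C.gate a.1).wiring) {a : Pos × Dir} (ha : a ∈ C.arcs) :
    (C.gate (a.1 + a.2.vec)).wiring.inputs = ((v' a).2.outWire a.2).1 := by
  rw [hw a ha, (C.arc_wiring a ha).2.2]

lemma Circuit.Closed.inputs_eq_of_inputVectorOf_eq (hclosed : C.Closed)
    {v' : Pos × Dir → B × Wiring} (hw : ∀ a ∈ C.arcs, (v' a).2 = (C.gate a.1).wiring)
    {z z' : Pos} (hz : z ∈ C.dom) (hz' : z' ∈ C.dom)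
    (h : inputVectorOf C.arcs v' z = inputVectorOf C.arcs v' z') :
    (C.gate z).wiring.inputs = (C.gate z').wiring.inputs := by
  have hmem : ∀ δ : Dir,
      δ.opp ∈ (C.gate z).wiring.inputs ↔ δ.opp ∈ (C.gate z').wiring.inputs := fun δ => by
      rw [← hclosed.sub_mem_arcs_iff hz, ← hclosed.sub_mem_arcs_iff hz', ← mem_inDirsOf,
        ← mem_inDirsOf, inDirsOf_eq_of_inputVectorOf_eq h]
  rcases hin : (C.gate z).wiring.inputs with _ | ⟨e, _⟩
  · refine (List.eq_nil_iff_forall_not_mem.mpr fun e he => ?_).symm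
    simpa [Dir.opp_opp, hin] using (hmem e.opp).mpr (by rwa [Dir.opp_opp])
  · have harc : (z - e.opp.vec, e.opp) ∈ C.arcs :=
      (hclosed.sub_mem_arcs_iff hz e.opp).mpr (by rw [Dir.opp_opp, hin]; exact List.mem_cons_self)
    have harc' : (z' - e.opp.vec, e.opp) ∈ C.arcs := by
      rwa [← mem_inDirsOf, ← inDirsOf_eq_of_inputVectorOf_eq h, mem_inDirsOf]
    have hread := C.inputs_eq_outWire hw harc
    have hread' := C.inputs_eq_outWire hw harc'
    simp only [sub_add_cancel] at hread hread'
    rw [← hin, hread, hread', apply_eq_of_inputVectorOf_eq h harc]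

def Gate.lift (g : Gate A) : Gate (A × Wiring) where
  wiring := g.wiring
  fn xs := (g.fn (xs.map Prod.fst)).map fun y => (y, g.wiring)

def Circuit.lift (C : Circuit A) : Circuit (A × Wiring) where
  __ := C
  gate z := (C.gate z).lift
  fn_arity z hz xs hxs := by
    simpa [Gate.lift] using C.fn_arity z hz _ (by simpa [Gate.lift] using hxs)

variable {v' : Pos × Dir → A × Wiring}

lemma Conforms.of_lift (hv : Conforms C.lift v') {z : Pos} (hz : z ∈ C.dom) {d : Dir}
    (hd : d ∈ (C.gate z).wiring.outputs) :
    ((C.gate z).fn (inputVals C (fun a => (v' a).1) z))[(C.gate z).wiring.outIdx d]? =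
        some (v' (z, d)).1 ∧ (v' (z, d)).2 = (C.gate z).wiring := by
  obtain ⟨y, hy, hyv⟩ := Option.map_eq_some_iff.mp <| by
    simpa only [Circuit.lift, Gate.lift, inputVals, List.map_map, Function.comp_def,
      List.getElem?_map] using hv z hz d hd
  exact ⟨by rw [inputVals, hy, ← hyv], by rw [← hyv]⟩

lemma Conforms.fst_of_lift (hv : Conforms C.lift v') : Conforms C fun a => (v' a).1 :=
  fun _ hz _ hd => (hv.of_lift hz hd).1

lemma Conforms.snd_of_lift (hv : Conforms C.lift v') :
    ∀ a ∈ C.arcs, (v' a).2 = (C.gate a.1).wiring :=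
  fun a ha => (hv.of_lift (C.arcs_src a ha) (C.arc_wiring a ha).1).2

lemma Circuit.Closed.gate_eq_of_inputVectorOf_eq (hclosed : C.Closed) (hsd : C.SelfDescribing)
    (hv : Conforms C.lift v') {z z' : Pos} (hz : z ∈ C.dom) (hz' : z' ∈ C.dom)
    (h : inputVectorOf C.arcs v' z = inputVectorOf C.arcs v' z') : C.gate z = C.gate z' := by
  obtain ⟨dec, hdec⟩ := hsd
  rw [← hdec _ hv.fst_of_lift z hz, ← hdec _ hv.fst_of_lift z' hz',
    ← hclosed.inputs_eq_of_inputVectorOf_eq hv.snd_of_lift hz hz' h]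
  exact congrArg dec <| List.map_congr_left fun e he => by
    rw [hclosed.apply_add_eq_of_inputVectorOf_eq hz h he]

lemma Circuit.Closed.apply_eq_of_inputVectorOf_eq (hclosed : C.Closed) (hsd : C.SelfDescribing)
    (hv : Conforms C.lift v') {z z' : Pos} {d : Dir} (ha : (z, d) ∈ C.arcs)
    (ha' : (z', d) ∈ C.arcs) (h : inputVectorOf C.arcs v' z = inputVectorOf C.arcs v' z') :
    v' (z, d) = v' (z', d) := by
  have hz := C.arcs_src _ ha
  have hgate := hclosed.gate_eq_of_inputVectorOf_eq hsd hv hz (C.arcs_src _ ha') h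
  have hvals : inputVals C.lift v' z = inputVals C.lift v' z' := by
    simp only [inputVals, Circuit.lift, Gate.lift, ← hgate]
    exact List.map_congr_left fun e he => hclosed.apply_add_eq_of_inputVectorOf_eq hz h he
  have hout := hv z hz d (C.arc_wiring _ ha).1
  rw [hvals, show C.lift.gate z = C.lift.gate z' from congrArg Gate.lift hgate,
    hv z' (C.arcs_src _ ha') d (C.arc_wiring _ ha').1] at hout
  exact (Option.some.inj hout).symm

lemma Circuit.Closed.incoming_eq_outWire (hclosed : C.Closed) (hv : Conforms C.lift v')
    {a : Pos × Dir} (ha : a ∈ C.arcs) :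
    {e : Dir | (a.1 + a.2.vec - e.vec, e) ∈ C.arcs} =
      {e | e.opp ∈ ((v' a).2.outWire a.2).1} := by
  ext e
  exact (hclosed.sub_mem_arcs_iff (C.arcs_tgt a ha) e).trans
    (by rw [C.inputs_eq_outWire hv.snd_of_lift ha]; rfl)

lemma Circuit.Closed.locallyDeterministic_lift (hclosed : C.Closed) (hsd : C.SelfDescribing)
    (hv : Conforms C.lift v') : LocallyDeterministic C.arcs v' := by
  refine locallyDeterministic_of_factorsThrough (fun a b hab => ?_) (fun a b hab => ?_)
  · obtain ⟨h, hd⟩ := Prod.mk.inj hab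
    obtain ⟨⟨z, d⟩, ha⟩ := a
    obtain ⟨⟨z', d'⟩, hb⟩ := b
    cases hd
    exact hclosed.apply_eq_of_inputVectorOf_eq hsd hv ha hb h
  · obtain ⟨hd, hP⟩ := Prod.mk.inj hab
    dsimp only
    rw [hclosed.incoming_eq_outWire hv a.2, hclosed.incoming_eq_outWire hv b.2, hd, hP]

end Circuit

theorem self_describing_locally_deterministic_general {A : Type} (C : Circuit A)
    (hclosed : C.Closed) (hsd : C.SelfDescribing) :
    ∃ C' : Circuit (A × Wiring),
      C'.dom = C.dom ∧ C'.arcs = C.arcs ∧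
      C'.inputBus = C.inputBus ∧ C'.outputBus = C.outputBus ∧
      (∀ z ∈ C.dom, (C'.gate z).wiring = (C.gate z).wiring) ∧
      (∀ z ∈ C.dom, ∀ xs : List (A × Wiring),
        (C'.gate z).fn xs =
          ((C.gate z).fn (xs.map Prod.fst)).map fun y => (y, (C.gate z).wiring)) ∧
      (∀ v' : Pos × Dir → A × Wiring, Conforms C' v' →
        LocallyDeterministic C.arcs v') :=
  ⟨C.lift, rfl, rfl, rfl, rfl, fun _ _ => rfl, fun _ _ _ => rfl,
    fun _ hv => hclosed.locallyDeterministic_lift hsd hv⟩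

/-- for a closed, evaluable, self-describing circuit `C`, the
circuit `C'` on `Σ × Wirings` obtained by making each gate also output its
wiring has a unique conforming valuation which is a locally deterministic
coloring of the arcs of the dependency graph of `C`. -/
theorem self_describing_locally_deterministic {A : Type} (C : Circuit A)
    (hclosed : C.Closed) (heval : C.Evaluable) (hsd : C.SelfDescribing) :
    ∃ C' : Circuit (A × Wiring),
      C'.dom = C.dom ∧ C'.arcs = C.arcs ∧
      C'.inputBus = C.inputBus ∧ C'.outputBus = C.outputBus ∧
      (∀ z ∈ C.dom, (C'.gate z).wiring = (C.gate z).wiring) ∧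
      (∀ z ∈ C.dom, ∀ xs : List (A × Wiring),
        (C'.gate z).fn xs =
          ((C.gate z).fn (xs.map Prod.fst)).map fun y => (y, (C.gate z).wiring)) ∧
      (∀ v' : Pos × Dir → A × Wiring, Conforms C' v' →
        LocallyDeterministic C.arcs v') :=
  self_describing_locally_deterministic_general C hclosed hsd

end SelfAssembly
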